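/- arXiv:1909.03198 — 4 statements merged into one kernel-verified Lean document; each statement's English description precedes it below -/
import Mathlib

section
/- For a finite maximum-entropy MDP with a continuously differentiable parametrized policy, the per-start-state objective J(θ|s₀) = Σ_a π_θ(a|s₀) Q^{π_θ}(s₀,a) + H^{π_θ}(s₀) is differentiable in θ with dJ(θ|s₀)/dθ = Σ_a π_θ(a|s₀) · dQ^{π_θ}(s₀,a)/dθ + 𝒢_θ(s₀), where 𝒢_θ(s) = Σ_a (dπ_θ(a|s)/dθ) Q^{π_θ}(s,a) + dH^{π_θ}(s)/dθ. -/
/-!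
Unrolling the recursion, `pk θ k` is the `k`-th power of the row-stochastic matrix
`P_θ(s, s') = Σ_a π_θ(a|s) p(s'|s,a)`. Row-stochastic matrices have ℓ∞ operator norm at most `1`,
so for `γ < 1` the series defining `Q` is a Neumann series and
`Q_θ(s,a) = r(s,a) + γ · p(·|s,a)ᵀ (I - γ P_θ)⁻¹ g_θ`, where
`g_θ(s') = Σ_a' π_θ(a'|s') r(s',a') + H_θ(s')`.
Inversion is differentiable on the units of a complete normed algebra, so `Q` is differentiable
in `θ`, and the formula for `dJ/dθ` is then just the product rule.
-/

open Matrix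

section LinftyOp

attribute [local instance] Matrix.linftyOpNormedRing Matrix.linftyOpNormedAlgebra

variable {n : Type*} [Fintype n] [DecidableEq n]

theorem Matrix.linfty_opNorm_le_one_of_mem_rowStochastic {M : Matrix n n ℝ}
    (hM : M ∈ rowStochastic ℝ n) : ‖M‖ ≤ 1 := by
  rw [mem_rowStochastic_iff_sum] at hM
  rw [linfty_opNorm_def]
  norm_cast
  refine Finset.sup_le fun i _ => ?_
  rw [← NNReal.coe_le_coe]
  push_cast
  simp only [Real.norm_eq_abs, abs_of_nonneg (hM.1 i _), hM.2 i, le_refl]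

theorem Matrix.linfty_opNorm_smul_lt_one_of_mem_rowStochastic {M : Matrix n n ℝ}
    (hM : M ∈ rowStochastic ℝ n) {γ : ℝ} (hγ : |γ| < 1) : ‖γ • M‖ < 1 :=
  calc ‖γ • M‖ ≤ |γ| * ‖M‖ := by rw [← Real.norm_eq_abs]; exact norm_smul_le γ M
    _ ≤ |γ| * 1 := by gcongr; exact linfty_opNorm_le_one_of_mem_rowStochastic hM
    _ < 1 := by rwa [mul_one]

theorem Matrix.hasSum_vecMul_pow_dotProduct {M : Matrix n n ℝ} (hM : ‖M‖ < 1) (v w : n → ℝ) :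
    HasSum (fun k => (v ᵥ* M ^ k) ⬝ᵥ w) ((v ᵥ* Ring.inverse (1 - M)) ⬝ᵥ w) := by
  let L : Matrix n n ℝ →ₗ[ℝ] ℝ :=
    { toFun := fun N => (v ᵥ* N) ⬝ᵥ w
      map_add' := by intro A B; simp [vecMul_add, add_dotProduct]
      map_smul' := by intro c A; simp [vecMul_smul, smul_dotProduct] }
  have hgeom : HasSum (fun k => M ^ k) (Ring.inverse (1 - M)) := by
    rw [NormedRing.inverse_one_sub M hM]
    exact (summable_geometric_of_norm_lt_one hM).hasSum
  exact hgeom.map L L.continuous_of_finiteDimensional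

theorem Matrix.tsum_discounted_vecMul_pow_dotProduct {M : Matrix n n ℝ}
    (hM : M ∈ rowStochastic ℝ n) {γ : ℝ} (hγ : |γ| < 1) (v w : n → ℝ) :
    ∑' k : ℕ, γ ^ (k + 1) * ((v ᵥ* M ^ k) ⬝ᵥ w) =
      γ * ((v ᵥ* Ring.inverse (1 - γ • M)) ⬝ᵥ w) := by
  have hsum := (hasSum_vecMul_pow_dotProduct
    (linfty_opNorm_smul_lt_one_of_mem_rowStochastic hM hγ) v w).mul_left γ
  refine Eq.trans (tsum_congr fun k => ?_) hsum.tsum_eq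
  rw [smul_pow, vecMul_smul, smul_dotProduct, smul_eq_mul, pow_succ']
  ring

theorem differentiableAt_matrix_iff {f : ℝ → Matrix n n ℝ} {x : ℝ} :
    DifferentiableAt ℝ f x ↔ ∀ i j, DifferentiableAt ℝ (fun t => f t i j) x := by
  refine ⟨fun hf i j => ?_, fun hf => ?_⟩
  · exact (entryLinearMap ℝ ℝ i j).toContinuousLinearMap.differentiableAt.comp x hf
  · have hsingle : f = fun t => ∑ i, ∑ j, f t i j • single i j (1 : ℝ) := by
      ext1 t
      conv_lhs => rw [matrix_eq_sum_single (f t)]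
      simp [smul_single]
    rw [hsingle]
    fun_prop

theorem differentiableAt_vecMul_resolvent_dotProduct {P : ℝ → Matrix n n ℝ} {w : ℝ → n → ℝ}
    {x γ : ℝ} (hP : ∀ i j, DifferentiableAt ℝ (fun t => P t i j) x)
    (hw : ∀ j, DifferentiableAt ℝ (fun t => w t j) x) (hPx : P x ∈ rowStochastic ℝ n)
    (hγ : |γ| < 1) (v : n → ℝ) :
    DifferentiableAt ℝ (fun t => (v ᵥ* Ring.inverse (1 - γ • P t)) ⬝ᵥ w t) x := by
  have hunit : IsUnit (1 - γ • P x) :=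
    (Units.oneSub _ (linfty_opNorm_smul_lt_one_of_mem_rowStochastic hPx hγ)).isUnit
  have hPd := differentiableAt_matrix_iff.mpr hP
  have hR : DifferentiableAt ℝ (fun t => Ring.inverse (1 - γ • P t)) x := by
    fun_prop (disch := exact hunit)
  have hRij := differentiableAt_matrix_iff.mp hR
  simp only [dotProduct, vecMul]
  fun_prop

theorem differentiableAt_tsum_discounted_vecMul_pow_dotProduct {P : ℝ → Matrix n n ℝ}
    {w : ℝ → n → ℝ} {x γ : ℝ} (hP : ∀ i j, DifferentiableAt ℝ (fun t => P t i j) x)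
    (hw : ∀ j, DifferentiableAt ℝ (fun t => w t j) x) (hP_stoch : ∀ t, P t ∈ rowStochastic ℝ n)
    (hγ : |γ| < 1) (v : n → ℝ) :
    DifferentiableAt ℝ (fun t => ∑' k : ℕ, γ ^ (k + 1) * ((v ᵥ* P t ^ k) ⬝ᵥ w t)) x := by
  simp only [tsum_discounted_vecMul_pow_dotProduct (hP_stoch _) hγ]
  exact (differentiableAt_vecMul_resolvent_dotProduct hP hw (hP_stoch x) hγ v).const_mul γ

end LinftyOp

section PolicyTransition

variable {S A : Type*} [Fintype S] [Fintype A] [DecidableEq S]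

def policyTransition (p : S → A → S → ℝ) (π : S → A → ℝ) : Matrix S S ℝ :=
  Matrix.of fun s s' => ∑ a, π s a * p s a s'

theorem policyTransition_mem_rowStochastic {p : S → A → S → ℝ} {π : S → A → ℝ}
    (hp_nonneg : ∀ s a s', 0 ≤ p s a s') (hp_sum : ∀ s a, ∑ s', p s a s' = 1)
    (hπ_nonneg : ∀ s a, 0 ≤ π s a) (hπ_sum : ∀ s, ∑ a, π s a = 1) :
    policyTransition p π ∈ rowStochastic ℝ S := by
  refine mem_rowStochastic_iff_sum.mpr ⟨fun s s' => ?_, fun s => ?_⟩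
  · exact Finset.sum_nonneg fun a _ => mul_nonneg (hπ_nonneg s a) (hp_nonneg s a s')
  · simp only [policyTransition, of_apply]
    rw [Finset.sum_comm]
    simp only [← Finset.mul_sum, hp_sum, mul_one, hπ_sum]

theorem eq_pow_policyTransition {p : S → A → S → ℝ} {π : S → A → ℝ} {pk : ℕ → S → S → ℝ}
    (hpk0 : ∀ s s', pk 0 s s' = if s' = s then 1 else 0)
    (hpkS : ∀ k s s', pk (k + 1) s s' = ∑ a, π s a * ∑ s'', p s a s'' * pk k s'' s') (k : ℕ) :
    pk k = policyTransition p π ^ k := by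
  induction k with
  | zero => ext s s'; simp [hpk0, one_apply, eq_comm]
  | succ k ih =>
    ext s s'
    simp only [hpkS, pow_succ', mul_apply, ih, policyTransition, of_apply, Finset.mul_sum,
      Finset.sum_mul, mul_assoc]
    exact Finset.sum_comm

end PolicyTransition

/-- For a finite maximum-entropy MDP with a continuously differentiable parametrized policy,
the per-start-state objective `J(θ|s₀) = Σ_a π_θ(a|s₀) Q^{π_θ}(s₀,a) + H^{π_θ}(s₀)` is
differentiable in `θ` with
`dJ(θ|s₀)/dθ = Σ_a π_θ(a|s₀) · dQ^{π_θ}(s₀,a)/dθ + 𝒢_θ(s₀)`, where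
`𝒢_θ(s) = Σ_a (dπ_θ(a|s)/dθ) Q^{π_θ}(s,a) + dH^{π_θ}(s)/dθ`. -/
theorem per_start_state_objective_deriv
    {S A : Type*} [Fintype S] [Fintype A] [DecidableEq S]
    (p : S → A → S → ℝ) (hp_nonneg : ∀ s a s', 0 ≤ p s a s')
    (hp_sum : ∀ s a, ∑ s', p s a s' = 1)
    (r : S → A → ℝ)
    (γ : ℝ) (hγ0 : 0 ≤ γ) (hγ1 : γ < 1)
    (π : ℝ → S → A → ℝ)
    (hπ_smooth : ∀ s a, ContDiff ℝ 1 (fun θ => π θ s a))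
    (hπ_pos : ∀ θ s a, 0 < π θ s a)
    (hπ_sum : ∀ θ s, ∑ a, π θ s a = 1)
    (pk : ℝ → ℕ → S → S → ℝ)
    (hpk0 : ∀ θ s s', pk θ 0 s s' = if s' = s then 1 else 0)
    (hpkS : ∀ θ k s s',
      pk θ (k + 1) s s' = ∑ a, π θ s a * ∑ s'', p s a s'' * pk θ k s'' s')
    (H : ℝ → S → ℝ) (hH : ∀ θ s, H θ s = -∑ a, π θ s a * Real.log (π θ s a))
    (Q : ℝ → S → A → ℝ)
    (hQ : ∀ θ s a, Q θ s a = r s a +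
      ∑' k : ℕ, γ ^ (k + 1) *
        ∑ s', (∑ s₁, p s a s₁ * pk θ k s₁ s') * ((∑ a', π θ s' a' * r s' a') + H θ s')) :
    ∀ (θ₀ : ℝ) (s₀ : S),
      HasDerivAt
        (fun θ => (∑ a, π θ s₀ a * Q θ s₀ a) + H θ s₀)
        ((∑ a, π θ₀ s₀ a * deriv (fun θ => Q θ s₀ a) θ₀) +
          ((∑ a, deriv (fun θ => π θ s₀ a) θ₀ * Q θ₀ s₀ a) +
            deriv (fun θ => H θ s₀) θ₀))
        θ₀ := by
  intro θ₀ s₀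
  have hπd : ∀ s a, Differentiable ℝ (fun θ => π θ s a) :=
    fun s a => (hπ_smooth s a).differentiable one_ne_zero
  have hHd : ∀ s, Differentiable ℝ (fun θ => H θ s) := by
    intro s
    simp only [hH]
    exact (Differentiable.fun_sum fun a _ =>
      (hπd s a).mul ((hπd s a).log fun θ => (hπ_pos θ s a).ne')).neg
  have hQd : ∀ a, DifferentiableAt ℝ (fun θ => Q θ s₀ a) θ₀ := by
    intro a
    simp only [hQ, eq_pow_policyTransition (hpk0 _) (hpkS _)]
    refine (differentiableAt_tsum_discounted_vecMul_pow_dotProduct (fun s s' => ?_)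
      (fun s' => by fun_prop) (fun θ => policyTransition_mem_rowStochastic hp_nonneg hp_sum
        (fun s a => (hπ_pos θ s a).le) (hπ_sum θ)) (abs_lt.mpr ⟨by linarith, hγ1⟩)
      (p s₀ a)).const_add _
    simp only [policyTransition, of_apply]
    fun_prop
  have hJ : HasDerivAt (fun θ => (∑ a, π θ s₀ a * Q θ s₀ a) + H θ s₀)
      ((∑ a, (deriv (fun θ => π θ s₀ a) θ₀ * Q θ₀ s₀ a +
        π θ₀ s₀ a * deriv (fun θ => Q θ s₀ a) θ₀)) + deriv (fun θ => H θ s₀) θ₀) θ₀ :=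
    (HasDerivAt.fun_sum fun a _ => (hπd s₀ a θ₀).hasDerivAt.mul (hQd a).hasDerivAt).add
      (hHd s₀ θ₀).hasDerivAt
  convert hJ using 1
  rw [Finset.sum_add_distrib]
  ring
end

section
/- For a finite maximum-entropy MDP with a continuously differentiable parametrized policy, the per-start-state objective J(θ|s₀) = Σ_a π_θ(a|s₀) Q^{π_θ}(s₀,a) + H^{π_θ}(s₀) satisfies dJ(θ|s₀)/dθ = Σ_{k=0}^∞ Σ_s γ^k p_k^{π_θ}(s₀→s) 𝒢_θ(s), where 𝒢_θ(s) = Σ_a (dπ_θ(a|s)/dθ) Q^{π_θ}(s,a) + dH^{π_θ}(s)/dθ, and the double series converges absolutely. -/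
/-!
Let `P_θ` be the state-transition matrix of `π_θ` and `ρ_θ(s) = Σ_a π_θ(a|s) r(s,a) + H^{π_θ}(s)`.
In the `ℓ∞`-operator norm a row-stochastic matrix has norm `≤ 1`, so `γ P_θ` has norm `< 1` and the
Neumann series `Σ_k γ^k P_θ^k` converges to `(1 - γ P_θ)⁻¹`. Hence the series in `Q^{π_θ}` sums to
`r + γ p V_θ` with `V_θ = (1 - γ P_θ)⁻¹ ρ_θ`, and `J(θ|·) = V_θ`. Differentiating
`(1 - γ P_θ) V_θ = ρ_θ` gives `V_θ' = (1 - γ P_θ)⁻¹ (ρ_θ' + γ P_θ' V_θ)`, the vector in brackets is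
`𝒢_θ`, and expanding the inverse as the Neumann series once more gives the claimed series.
-/

open Finset Matrix

namespace Matrix

variable {n : Type*} [Fintype n] [DecidableEq n]

section LinftyOp

attribute [local instance] Matrix.linftyOpNormedAddCommGroup Matrix.linftyOpNormedSpace
  Matrix.linftyOpNormedRing Matrix.linftyOpNormedAlgebra

theorem linfty_opNorm_le_one_of_mem_rowStochastic_s2 {P : Matrix n n ℝ}
    (hP : P ∈ rowStochastic ℝ n) : ‖P‖ ≤ 1 := by
  rw [linfty_opNorm_def, NNReal.coe_le_one]
  refine Finset.sup_le fun i _ => ?_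
  rw [← NNReal.coe_le_one, NNReal.coe_sum]
  simp only [coe_nnnorm, Real.norm_of_nonneg (nonneg_of_mem_rowStochastic hP),
    sum_row_of_mem_rowStochastic hP, le_refl]

theorem norm_smul_lt_one_of_mem_rowStochastic {P : Matrix n n ℝ} (hP : P ∈ rowStochastic ℝ n)
    {γ : ℝ} (hγ0 : 0 ≤ γ) (hγ1 : γ < 1) : ‖γ • P‖ < 1 := by
  rw [norm_smul, Real.norm_of_nonneg hγ0]
  nlinarith [linfty_opNorm_le_one_of_mem_rowStochastic_s2 hP, norm_nonneg P]

theorem isUnit_one_sub_smul_of_mem_rowStochastic {P : Matrix n n ℝ}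
    (hP : P ∈ rowStochastic ℝ n) {γ : ℝ} (hγ0 : 0 ≤ γ) (hγ1 : γ < 1) : IsUnit (1 - γ • P) :=
  isUnit_one_sub_of_norm_lt_one (norm_smul_lt_one_of_mem_rowStochastic hP hγ0 hγ1)

theorem hasSum_pow_mulVec_apply {P : Matrix n n ℝ} (hP : P ∈ rowStochastic ℝ n)
    {γ : ℝ} (hγ0 : 0 ≤ γ) (hγ1 : γ < 1) (v : n → ℝ) (i : n) :
    HasSum (fun k => γ ^ k * (P ^ k *ᵥ v) i) (((1 - γ • P)⁻¹ *ᵥ v) i) := by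
  let ℓ : Matrix n n ℝ →ₗ[ℝ] ℝ := (LinearMap.proj i).comp ((mulVecBilin ℝ ℝ).flip v)
  have hgeom := hasSum_geom_series_inverse _ (norm_smul_lt_one_of_mem_rowStochastic hP hγ0 hγ1)
  rw [← nonsing_inv_eq_ringInverse] at hgeom
  simpa [ℓ, smul_pow, smul_mulVec] using
    (LinearMap.toContinuousLinearMap ℓ).hasSum hgeom

theorem differentiableAt_of_forall_apply {E : Type*} [NormedAddCommGroup E] [NormedSpace ℝ E]
    {M : E → Matrix n n ℝ} {x : E} (hM : ∀ i j, DifferentiableAt ℝ (fun y => M y i j) x) :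
    DifferentiableAt ℝ M x := by
  have hsum : M = fun y => ∑ i, ∑ j, M y i j • single i j (1 : ℝ) := by
    ext1 y
    conv_lhs => rw [matrix_eq_sum_single (M y)]
    simp only [smul_single, smul_eq_mul, mul_one]
  rw [hsum]
  fun_prop (disch := assumption)

theorem differentiableAt_inv_apply {E : Type*} [NormedAddCommGroup E] [NormedSpace ℝ E]
    {M : E → Matrix n n ℝ} {x : E} (hM : ∀ i j, DifferentiableAt ℝ (fun y => M y i j) x)
    (hx : IsUnit (M x)) (i j : n) : DifferentiableAt ℝ (fun y => (M y)⁻¹ i j) x := by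
  simp only [nonsing_inv_eq_ringInverse]
  exact (LinearMap.toContinuousLinearMap (entryLinearMap ℝ ℝ i j)).differentiableAt.comp x
    ((differentiableAt_of_forall_apply hM).inverse hx)

end LinftyOp

theorem summable_abs_pow_apply_mul {P : Matrix n n ℝ} (hP : P ∈ rowStochastic ℝ n)
    {γ : ℝ} (hγ0 : 0 ≤ γ) (hγ1 : γ < 1) (v : n → ℝ) (i : n) :
    Summable (fun kj : ℕ × n => |γ ^ kj.1 * (P ^ kj.1) i kj.2 * v kj.2|) := by
  have hbound : Summable (fun kj : ℕ × n => γ ^ kj.1 * |v kj.2|) :=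
    (summable_geometric_of_lt_one hγ0 hγ1).mul_of_nonneg (Summable.of_finite (f := fun j => |v j|))
      (fun k => pow_nonneg hγ0 k) (fun j => abs_nonneg _)
  refine hbound.of_nonneg_of_le (fun _ => abs_nonneg _) fun ⟨k, j⟩ => ?_
  have hPk := pow_mem hP k
  rw [abs_mul, abs_mul, abs_of_nonneg (pow_nonneg hγ0 k),
    abs_of_nonneg (nonneg_of_mem_rowStochastic hPk)]
  gcongr
  exact mul_le_of_le_one_right (pow_nonneg hγ0 k) (le_one_of_mem_rowStochastic hPk)

theorem tsum_pow_succ_mul_sum_eq {P : Matrix n n ℝ} (hP : P ∈ rowStochastic ℝ n)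
    {γ : ℝ} (hγ0 : 0 ≤ γ) (hγ1 : γ < 1) (q v : n → ℝ) :
    ∑' k : ℕ, γ ^ (k + 1) * ∑ j, (∑ i, q i * (P ^ k) i j) * v j =
      γ * ∑ i, q i * ((1 - γ • P)⁻¹ *ᵥ v) i := by
  refine (((hasSum_sum fun i _ => (hasSum_pow_mulVec_apply hP hγ0 hγ1 v i).mul_left (q i)).mul_left
    γ).congr_fun fun k => ?_).tsum_eq
  simp only [mulVec, dotProduct, mul_sum, sum_mul]
  rw [sum_comm]
  exact sum_congr rfl fun _ _ => sum_congr rfl fun _ _ => by ring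

theorem mulVec_inv_mulVec {R : Type*} [CommRing R] {M : Matrix n n R} (hM : IsUnit M)
    (v : n → R) : M *ᵥ (M⁻¹ *ᵥ v) = v := by
  rw [mulVec_mulVec, mul_nonsing_inv _ ((isUnit_iff_isUnit_det M).1 hM), one_mulVec]

theorem inv_mulVec_mulVec {R : Type*} [CommRing R] {M : Matrix n n R} (hM : IsUnit M)
    (v : n → R) : M⁻¹ *ᵥ (M *ᵥ v) = v := by
  rw [mulVec_mulVec, nonsing_inv_mul _ ((isUnit_iff_isUnit_det M).1 hM), one_mulVec]

theorem hasDerivAt_inv_mulVec_apply {M : ℝ → Matrix n n ℝ} {M' : Matrix n n ℝ}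
    {ρ : ℝ → n → ℝ} {ρ' : n → ℝ} {θ₀ : ℝ} (hM : ∀ θ, IsUnit (M θ))
    (hM' : ∀ i j, HasDerivAt (fun θ => M θ i j) (M' i j) θ₀)
    (hρ' : ∀ i, HasDerivAt (fun θ => ρ θ i) (ρ' i) θ₀) (i : n) :
    HasDerivAt (fun θ => ((M θ)⁻¹ *ᵥ ρ θ) i)
      (((M θ₀)⁻¹ *ᵥ (ρ' - M' *ᵥ ((M θ₀)⁻¹ *ᵥ ρ θ₀))) i) θ₀ := by
  set V := fun θ => (M θ)⁻¹ *ᵥ ρ θ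
  have hV : ∀ j, HasDerivAt (fun θ => V θ j) (deriv (fun θ => V θ j) θ₀) θ₀ := by
    intro j
    have hinv := differentiableAt_inv_apply (fun i j => (hM' i j).differentiableAt) (hM θ₀)
    exact (DifferentiableAt.fun_sum fun k _ => (hinv j k).mul (hρ' k).differentiableAt).hasDerivAt
  set V' := fun j => deriv (fun θ => V θ j) θ₀
  have hMV' : M θ₀ *ᵥ V' = ρ' - M' *ᵥ V θ₀ := by
    ext j
    have hMV : HasDerivAt (fun θ => (M θ *ᵥ V θ) j) ((M' *ᵥ V θ₀ + M θ₀ *ᵥ V') j) θ₀ := by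
      simp only [mulVec, dotProduct, Pi.add_apply, ← sum_add_distrib]
      exact HasDerivAt.fun_sum fun k _ => (hM' j k).mul (hV k)
    simp only [V, mulVec_inv_mulVec (hM _)] at hMV
    rw [Pi.sub_apply, (hρ' j).unique hMV, Pi.add_apply]
    ring
  rw [← hMV', inv_mulVec_mulVec (hM θ₀)]
  exact hV i

end Matrix

section MDP

variable {S A : Type*} [Fintype A]

def transitionMatrix (p : S → A → S → ℝ) (π : S → A → ℝ) : Matrix S S ℝ :=
  of fun s s' => ∑ a, π s a * p s a s'

/-- The entropy bonus `h = H^π` is a separate argument so that the same definition also expresses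
the derivative `Σ_a π'(a|s) r(s,a) + H'(s)`. -/
def policyReward (r : S → A → ℝ) (π : S → A → ℝ) (h : S → ℝ) : S → ℝ :=
  fun s => ∑ a, π s a * r s a + h s

noncomputable def softValue [Fintype S] [DecidableEq S] (p : S → A → S → ℝ) (r : S → A → ℝ)
    (γ : ℝ) (π : S → A → ℝ) (h : S → ℝ) : S → ℝ :=
  (1 - γ • transitionMatrix p π)⁻¹ *ᵥ policyReward r π h

noncomputable def softQ [Fintype S] [DecidableEq S] (p : S → A → S → ℝ) (r : S → A → ℝ)
    (γ : ℝ) (π : S → A → ℝ) (h : S → ℝ) (s : S) (a : A) : ℝ :=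
  r s a + γ * ∑ s₁, p s a s₁ * softValue p r γ π h s₁

theorem transitionMatrix_mem_rowStochastic [Fintype S] [DecidableEq S] {p : S → A → S → ℝ}
    (hp_nonneg : ∀ s a s', 0 ≤ p s a s') (hp_sum : ∀ s a, ∑ s', p s a s' = 1)
    {π : S → A → ℝ} (hπ_nonneg : ∀ s a, 0 ≤ π s a) (hπ_sum : ∀ s, ∑ a, π s a = 1) :
    transitionMatrix p π ∈ rowStochastic ℝ S := by
  refine mem_rowStochastic_iff_sum.2 ⟨fun s s' => ?_, fun s => ?_⟩
  · exact sum_nonneg fun a _ => mul_nonneg (hπ_nonneg s a) (hp_nonneg s a s')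
  · simp only [transitionMatrix, of_apply]
    rw [sum_comm]
    simp only [← mul_sum, hp_sum, mul_one, hπ_sum]

theorem eq_transitionMatrix_pow_apply [Fintype S] [DecidableEq S] {p : S → A → S → ℝ}
    {π : S → A → ℝ} {pk : ℕ → S → S → ℝ} (hpk0 : ∀ s s', pk 0 s s' = if s' = s then 1 else 0)
    (hpkS : ∀ k s s', pk (k + 1) s s' = ∑ a, π s a * ∑ s'', p s a s'' * pk k s'' s')
    (k : ℕ) (s s' : S) : pk k s s' = (transitionMatrix p π ^ k) s s' := by
  induction k generalizing s with
  | zero => simp [hpk0, one_apply, eq_comm]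
  | succ k ih =>
    simp only [hpkS, ih, pow_succ', mul_apply, transitionMatrix, of_apply, mul_sum, sum_mul]
    rw [sum_comm]
    exact sum_congr rfl fun _ _ => sum_congr rfl fun _ _ => by ring

theorem policyReward_add_smul_transitionMatrix_mulVec [Fintype S] (p : S → A → S → ℝ)
    (r : S → A → ℝ) (γ : ℝ) (π : S → A → ℝ) (h V : S → ℝ) (s : S) :
    (policyReward r π h + γ • (transitionMatrix p π *ᵥ V)) s =
      ∑ a, π s a * (r s a + γ * ∑ s₁, p s a s₁ * V s₁) + h s := by
  simp only [policyReward, transitionMatrix, Pi.add_apply, Pi.smul_apply, smul_eq_mul,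
    mulVec, dotProduct, of_apply, mul_add, sum_add_distrib, mul_sum, sum_mul]
  rw [sum_comm (f := fun _ _ => γ * _)]
  simp only [mul_left_comm γ, mul_assoc]
  ring

theorem hasDerivAt_transitionMatrix_apply (p : S → A → S → ℝ) {π : ℝ → S → A → ℝ}
    {π' : S → A → ℝ} {θ₀ : ℝ} (hπ : ∀ s a, HasDerivAt (fun θ => π θ s a) (π' s a) θ₀)
    (s s' : S) :
    HasDerivAt (fun θ => transitionMatrix p (π θ) s s') (transitionMatrix p π' s s') θ₀ :=
  HasDerivAt.fun_sum fun a _ => (hπ s a).mul_const _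

theorem hasDerivAt_policyReward_apply (r : S → A → ℝ) {π : ℝ → S → A → ℝ} {π' : S → A → ℝ}
    {h : ℝ → S → ℝ} {h' : S → ℝ} {θ₀ : ℝ}
    (hπ : ∀ s a, HasDerivAt (fun θ => π θ s a) (π' s a) θ₀)
    (hh : ∀ s, HasDerivAt (fun θ => h θ s) (h' s) θ₀) (s : S) :
    HasDerivAt (fun θ => policyReward r (π θ) (h θ) s) (policyReward r π' h' s) θ₀ :=
  (HasDerivAt.fun_sum fun a _ => (hπ s a).mul_const _).add (hh s)

theorem sum_mul_softQ_add_eq_softValue [Fintype S] [DecidableEq S] {p : S → A → S → ℝ}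
    {π : S → A → ℝ} (hP : transitionMatrix p π ∈ rowStochastic ℝ S) (r : S → A → ℝ) {γ : ℝ}
    (hγ0 : 0 ≤ γ) (hγ1 : γ < 1) (h : S → ℝ) (s : S) :
    ∑ a, π s a * softQ p r γ π h s a + h s = softValue p r γ π h s := by
  have hV := mulVec_inv_mulVec (isUnit_one_sub_smul_of_mem_rowStochastic hP hγ0 hγ1)
    (policyReward r π h)
  rw [sub_mulVec, one_mulVec, smul_mulVec, sub_eq_iff_eq_add] at hV
  simp only [softQ, ← policyReward_add_smul_transitionMatrix_mulVec]
  exact congrFun hV.symm s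

theorem hasDerivAt_softValue_apply [Fintype S] [DecidableEq S] {p : S → A → S → ℝ}
    {π : ℝ → S → A → ℝ} (hP : ∀ θ, transitionMatrix p (π θ) ∈ rowStochastic ℝ S)
    (r : S → A → ℝ) {γ : ℝ} (hγ0 : 0 ≤ γ) (hγ1 : γ < 1) {h : ℝ → S → ℝ} {π' : S → A → ℝ}
    {h' : S → ℝ} {θ₀ : ℝ} (hπ' : ∀ s a, HasDerivAt (fun θ => π θ s a) (π' s a) θ₀)
    (hh' : ∀ s, HasDerivAt (fun θ => h θ s) (h' s) θ₀) (s : S) :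
    HasDerivAt (fun θ => softValue p r γ (π θ) (h θ) s)
      (((1 - γ • transitionMatrix p (π θ₀))⁻¹ *ᵥ
        fun s => ∑ a, π' s a * softQ p r γ (π θ₀) (h θ₀) s a + h' s) s) θ₀ := by
  have hM' i j : HasDerivAt (fun θ => (1 - γ • transitionMatrix p (π θ)) i j)
      ((-(γ • transitionMatrix p π')) i j) θ₀ := by
    simpa using ((hasDerivAt_transitionMatrix_apply p hπ' i j).const_mul γ).const_sub _
  have := hasDerivAt_inv_mulVec_apply
    (fun θ => isUnit_one_sub_smul_of_mem_rowStochastic (hP θ) hγ0 hγ1) hM'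
    (hasDerivAt_policyReward_apply r hπ' hh') s
  rw [neg_mulVec, sub_neg_eq_add, smul_mulVec] at this
  simp only [softQ, ← policyReward_add_smul_transitionMatrix_mulVec]
  exact this

theorem differentiableAt_neg_sum_mul_log {π : ℝ → A → ℝ} {θ₀ : ℝ}
    (hπ : ∀ a, DifferentiableAt ℝ (fun θ => π θ a) θ₀) (hπ0 : ∀ a, π θ₀ a ≠ 0) :
    DifferentiableAt ℝ (fun θ => -∑ a, π θ a * Real.log (π θ a)) θ₀ := by
  fun_prop (disch := exact hπ0 _)

end MDP

/-- For a finite maximum-entropy MDP with a continuously differentiable parametrized policy,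
the per-start-state objective `J(θ|s₀) = Σ_a π_θ(a|s₀) Q^{π_θ}(s₀,a) + H^{π_θ}(s₀)` satisfies
`dJ(θ|s₀)/dθ = Σ_{k=0}^∞ Σ_s γ^k p_k^{π_θ}(s₀→s) 𝒢_θ(s)`, where
`𝒢_θ(s) = Σ_a (dπ_θ(a|s)/dθ) Q^{π_θ}(s,a) + dH^{π_θ}(s)/dθ`, and the double series
converges absolutely. -/
theorem per_start_state_objective_deriv_series
    {S A : Type*} [Fintype S] [Fintype A] [DecidableEq S]
    (p : S → A → S → ℝ) (hp_nonneg : ∀ s a s', 0 ≤ p s a s')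
    (hp_sum : ∀ s a, ∑ s', p s a s' = 1)
    (r : S → A → ℝ)
    (γ : ℝ) (hγ0 : 0 ≤ γ) (hγ1 : γ < 1)
    (π : ℝ → S → A → ℝ)
    (hπ_smooth : ∀ s a, ContDiff ℝ 1 (fun θ => π θ s a))
    (hπ_pos : ∀ θ s a, 0 < π θ s a)
    (hπ_sum : ∀ θ s, ∑ a, π θ s a = 1)
    (pk : ℝ → ℕ → S → S → ℝ)
    (hpk0 : ∀ θ s s', pk θ 0 s s' = if s' = s then 1 else 0)
    (hpkS : ∀ θ k s s',
      pk θ (k + 1) s s' = ∑ a, π θ s a * ∑ s'', p s a s'' * pk θ k s'' s')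
    (H : ℝ → S → ℝ) (hH : ∀ θ s, H θ s = -∑ a, π θ s a * Real.log (π θ s a))
    (Q : ℝ → S → A → ℝ)
    (hQ : ∀ θ s a, Q θ s a = r s a +
      ∑' k : ℕ, γ ^ (k + 1) *
        ∑ s', (∑ s₁, p s a s₁ * pk θ k s₁ s') * ((∑ a', π θ s' a' * r s' a') + H θ s'))
    -- the quantity 𝒢_θ(s)
    (G : ℝ → S → ℝ)
    (hG : ∀ θ₀ s, G θ₀ s = (∑ a, deriv (fun θ => π θ s a) θ₀ * Q θ₀ s a) +
      deriv (fun θ => H θ s) θ₀) :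
    ∀ (θ₀ : ℝ) (s₀ : S),
      Summable (fun ks : ℕ × S => |γ ^ ks.1 * pk θ₀ ks.1 s₀ ks.2 * G θ₀ ks.2|) ∧
      HasDerivAt
        (fun θ => (∑ a, π θ s₀ a * Q θ s₀ a) + H θ s₀)
        (∑' k : ℕ, ∑ s, γ ^ k * pk θ₀ k s₀ s * G θ₀ s)
        θ₀ := by
  intro θ₀ s₀
  have hP θ : transitionMatrix p (π θ) ∈ rowStochastic ℝ S :=
    transitionMatrix_mem_rowStochastic hp_nonneg hp_sum (fun s a => (hπ_pos θ s a).le) (hπ_sum θ)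
  have hpk θ := eq_transitionMatrix_pow_apply (hpk0 θ) (hpkS θ)
  have hQ' θ : Q θ = softQ p r γ (π θ) (H θ) := by
    ext s a
    simp only [hQ, hpk]
    rw [tsum_pow_succ_mul_sum_eq (hP θ) hγ0 hγ1]
    rfl
  have hπ' s a : HasDerivAt (fun θ => π θ s a) (deriv (fun θ => π θ s a) θ₀) θ₀ :=
    ((hπ_smooth s a).differentiable one_ne_zero θ₀).hasDerivAt
  have hH' s : HasDerivAt (fun θ => H θ s) (deriv (fun θ => H θ s) θ₀) θ₀ := by
    refine DifferentiableAt.hasDerivAt ?_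
    simp only [hH]
    exact differentiableAt_neg_sum_mul_log (fun a => (hπ' s a).differentiableAt)
      fun a => (hπ_pos θ₀ s a).ne'
  refine ⟨by simpa only [hpk] using summable_abs_pow_apply_mul (hP θ₀) hγ0 hγ1 (G θ₀) s₀, ?_⟩
  simp only [hQ', sum_mul_softQ_add_eq_softValue (hP _) r hγ0 hγ1]
  rw [((hasSum_pow_mulVec_apply (hP θ₀) hγ0 hγ1 (G θ₀) s₀).congr_fun fun k => ?_).tsum_eq]
  · simpa only [funext (hG θ₀), hQ'] using hasDerivAt_softValue_apply hP r hγ0 hγ1 hπ' hH' s₀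
  · simp only [hpk, mulVec, dotProduct, mul_sum, mul_assoc]
end

section
/- For a finite maximum-entropy MDP, the soft Bellman backup operator 𝒯 defined on functions Q : S × A → ℝ by (𝒯Q)(s,a) = r(s,a) + γ Σ_{s'} p(s'|s,a) Σ_{a'} π(a'|s') (Q(s',a') − log π(a'|s')) is a γ-contraction in the supremum norm: for all Q₁, Q₂ : S × A → ℝ, max_{(s,a)} |(𝒯Q₁)(s,a) − (𝒯Q₂)(s,a)| ≤ γ · max_{(s,a)} |Q₁(s,a) − Q₂(s,a)|. -/
/-- The soft Bellman backup operator
`(𝒯Q)(s,a) = r(s,a) + γ Σ_{s'} p(s'|s,a) Σ_{a'} π(a'|s') (Q(s',a') − log π(a'|s'))`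
is a γ-contraction in the supremum norm on a finite maximum-entropy MDP. -/
theorem soft_bellman_operator_contraction
    {S A : Type*} [Fintype S] [Fintype A] [Nonempty S] [Nonempty A]
    (p : S → A → S → ℝ) (hp_nonneg : ∀ s a s', 0 ≤ p s a s')
    (hp_sum : ∀ s a, ∑ s', p s a s' = 1)
    (r : S → A → ℝ)
    (γ : ℝ) (hγ0 : 0 ≤ γ) (hγ1 : γ < 1)
    (π : S → A → ℝ) (hπ_pos : ∀ s a, 0 < π s a)
    (hπ_sum : ∀ s, ∑ a, π s a = 1)
    (T : (S → A → ℝ) → S → A → ℝ)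
    (hT : ∀ Q s a, T Q s a = r s a +
      γ * ∑ s', p s a s' * ∑ a', π s' a' * (Q s' a' - Real.log (π s' a'))) :
    ∀ Q₁ Q₂ : S → A → ℝ,
      (Finset.univ.sup' Finset.univ_nonempty
          (fun sa : S × A => |T Q₁ sa.1 sa.2 - T Q₂ sa.1 sa.2|)) ≤
        γ * (Finset.univ.sup' Finset.univ_nonempty
          (fun sa : S × A => |Q₁ sa.1 sa.2 - Q₂ sa.1 sa.2|)) := by
  intro Q₁ Q₂
  set M := Finset.univ.sup' Finset.univ_nonempty
      (fun sa : S × A => |Q₁ sa.1 sa.2 - Q₂ sa.1 sa.2|) with hM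
  have hMle : ∀ s a, |Q₁ s a - Q₂ s a| ≤ M := by
    intro s a
    exact Finset.le_sup' (f := fun sa : S × A => |Q₁ sa.1 sa.2 - Q₂ sa.1 sa.2|)
      (Finset.mem_univ (s, a))
  apply Finset.sup'_le
  intro sa _
  obtain ⟨s, a⟩ := sa
  simp only
  have hdiff : T Q₁ s a - T Q₂ s a
      = γ * ∑ s', p s a s' * ∑ a', π s' a' * (Q₁ s' a' - Q₂ s' a') := by
    rw [hT, hT, add_sub_add_left_eq_sub, ← mul_sub, ← Finset.sum_sub_distrib]
    congr 1
    apply Finset.sum_congr rfl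
    intro s' _
    rw [← mul_sub, ← Finset.sum_sub_distrib]
    congr 1
    apply Finset.sum_congr rfl
    intro a' _
    ring
  rw [hdiff, abs_mul, abs_of_nonneg hγ0]
  apply mul_le_mul_of_nonneg_left _ hγ0
  calc |∑ s', p s a s' * ∑ a', π s' a' * (Q₁ s' a' - Q₂ s' a')|
      ≤ ∑ s', |p s a s' * ∑ a', π s' a' * (Q₁ s' a' - Q₂ s' a')| :=
        Finset.abs_sum_le_sum_abs _ _
    _ ≤ ∑ s', p s a s' * M := by
        apply Finset.sum_le_sum
        intro s' _
        rw [abs_mul, abs_of_nonneg (hp_nonneg s a s')]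
        apply mul_le_mul_of_nonneg_left _ (hp_nonneg s a s')
        calc |∑ a', π s' a' * (Q₁ s' a' - Q₂ s' a')|
            ≤ ∑ a', |π s' a' * (Q₁ s' a' - Q₂ s' a')| := Finset.abs_sum_le_sum_abs _ _
          _ ≤ ∑ a', π s' a' * M := by
              apply Finset.sum_le_sum
              intro a' _
              rw [abs_mul, abs_of_nonneg (hπ_pos s' a').le]
              exact mul_le_mul_of_nonneg_left (hMle s' a') (hπ_pos s' a').le
          _ = M := by rw [← Finset.sum_mul, hπ_sum, one_mul]
    _ = M := by rw [← Finset.sum_mul, hp_sum, one_mul]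
end

section
/- Compatible function approximation introduces no bias in the soft policy gradient: let S × A be finite, let ρ : S × A → ℝ with ρ(s,a) > 0 and Σ ρ = 1, let ψ : S × A → ℝ^d (the score features ∇_θ log π(a|s)), let Q : S × A → ℝ be arbitrary (the true soft Q-function), and for ω ∈ ℝ^d define the compatible approximator Q^ω(s,a) = ⟨ω, ψ(s,a)⟩. If ω* minimizes the mean-squared error ε²(ω) = Σ_{(s,a)} ρ(s,a) (Q^ω(s,a) − Q(s,a))² over ℝ^d, then Σ_{(s,a)} ρ(s,a) (Q^{ω*}(s,a) − Q(s,a)) ψ(s,a) = 0, and hence for any function b : S × A → ℝ (e.g. b(s,a) = log π(a|s) + 1), Σ_{(s,a)} ρ(s,a) (Q^{ω*}(s,a) − b(s,a)) ψ(s,a) = Σ_{(s,a)} ρ(s,a) (Q(s,a) − b(s,a)) ψ(s,a); that is, the soft policy gradient computed with Q^{ω*} equals the soft policy gradient computed with the true Q. -/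
/-!
Along the line `ω* + t • g`, with `g = Σ ρ (Q^{ω*} − Q) ψ`, the error is the quadratic
`ε²(ω*) + 2 (g ⬝ᵥ g) t + c t²`. Minimality at `t = 0` forces its linear coefficient to vanish,
so `g ⬝ᵥ g = 0` and `g = 0`. Replacing `Q` by a baseline `b` on both sides changes them by the
same amount, which gives the second identity.
-/

open Finset

theorem eq_zero_of_forall_nonneg_mul_add_mul_sq {a b : ℝ} (h : ∀ t : ℝ, 0 ≤ b * t + a * t ^ 2) :
    b = 0 := by
  set s := 1 / (|a| + 1)
  have hs : 0 < s := by positivity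
  have has : a * s < 1 := by
    rw [mul_one_div, div_lt_one (by positivity)]
    linarith [le_abs_self a]
  have key : 0 ≤ b ^ 2 * s * (a * s - 1) := by
    have := h (-b * s)
    ring_nf at this ⊢
    linarith
  have hb : b ^ 2 * s ≤ 0 := nonpos_of_mul_nonneg_left key (by linarith)
  exact (pow_eq_zero_iff two_ne_zero).mp
    (le_antisymm (nonpos_of_mul_nonpos_left hb hs) (sq_nonneg b))

section WeightedLeastSquares

variable {ι n : Type*} [Fintype ι] [Fintype n]

noncomputable def weightedSqError (w : ι → ℝ) (ψ : ι → n → ℝ) (y : ι → ℝ) (ω : n → ℝ) : ℝ :=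
  ∑ i, w i * (ω ⬝ᵥ ψ i - y i) ^ 2

/-- Half the gradient of `weightedSqError w ψ y` at `ω`. -/
noncomputable def weightedResidualSum (w : ι → ℝ) (ψ : ι → n → ℝ) (y : ι → ℝ) (ω : n → ℝ) :
    n → ℝ :=
  ∑ i, (w i * (ω ⬝ᵥ ψ i - y i)) • ψ i

theorem weightedSqError_add_smul (w : ι → ℝ) (ψ : ι → n → ℝ) (y : ι → ℝ) (ω v : n → ℝ) (t : ℝ) :
    weightedSqError w ψ y (ω + t • v) = weightedSqError w ψ y ω
      + 2 * (v ⬝ᵥ weightedResidualSum w ψ y ω) * t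
      + (∑ i, w i * (v ⬝ᵥ ψ i) ^ 2) * t ^ 2 := by
  simp only [weightedSqError, weightedResidualSum, dotProduct_sum, dotProduct_smul,
    add_dotProduct, smul_dotProduct, smul_eq_mul, mul_sum, sum_mul, ← sum_add_distrib]
  refine sum_congr rfl fun i _ => ?_
  rw [dotProduct_comm v]
  ring

theorem weightedResidualSum_eq_zero_of_forall_le {w : ι → ℝ} {ψ : ι → n → ℝ} {y : ι → ℝ}
    {ω₀ : n → ℝ} (hmin : ∀ ω, weightedSqError w ψ y ω₀ ≤ weightedSqError w ψ y ω) :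
    weightedResidualSum w ψ y ω₀ = 0 := by
  set g := weightedResidualSum w ψ y ω₀
  have hgg : 2 * (g ⬝ᵥ g) = 0 := eq_zero_of_forall_nonneg_mul_add_mul_sq fun t => by
    have := hmin (ω₀ + t • g)
    rw [weightedSqError_add_smul] at this
    linarith
  exact dotProduct_self_eq_zero.mp (by linarith)

end WeightedLeastSquares

theorem compatible_function_approximation_unbiased_general
    {S A : Type*} [Fintype S] [Fintype A] (d : ℕ)
    (ρ : S × A → ℝ)
    (ψ : S × A → Fin d → ℝ)
    (Q : S × A → ℝ)
    (Qω : (Fin d → ℝ) → S × A → ℝ)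
    (hQω : ∀ ω sa, Qω ω sa = ∑ i, ω i * ψ sa i)
    (ε2 : (Fin d → ℝ) → ℝ)
    (hε2 : ∀ ω, ε2 ω = ∑ sa : S × A, ρ sa * (Qω ω sa - Q sa) ^ 2)
    (ωstar : Fin d → ℝ)
    (hmin : ∀ ω : Fin d → ℝ, ε2 ωstar ≤ ε2 ω) :
    (∑ sa : S × A, (ρ sa * (Qω ωstar sa - Q sa)) • ψ sa) = 0 ∧
    ∀ b : S × A → ℝ,
      (∑ sa : S × A, (ρ sa * (Qω ωstar sa - b sa)) • ψ sa) =
        ∑ sa : S × A, (ρ sa * (Q sa - b sa)) • ψ sa := by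
  have hQω' : Qω = fun ω sa => ω ⬝ᵥ ψ sa := funext₂ hQω
  have hε2' : ε2 = weightedSqError ρ ψ Q := funext fun ω => by
    rw [hε2, hQω', weightedSqError]
  subst hQω' hε2'
  have unbiased : weightedResidualSum ρ ψ Q ωstar = 0 :=
    weightedResidualSum_eq_zero_of_forall_le hmin
  refine ⟨unbiased, fun b => ?_⟩
  rw [← sub_eq_zero, ← sum_sub_distrib, ← unbiased, weightedResidualSum]
  refine sum_congr rfl fun sa _ => ?_
  rw [← sub_smul]
  ring_nf

/-- **Compatible function approximation introduces no bias.** Let `S × A` be finite, `ρ` a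
strictly positive probability distribution on `S × A`, `ψ : S × A → ℝ^d` the score features,
`Q : S × A → ℝ` arbitrary, and `Q^ω(s,a) = ⟨ω, ψ(s,a)⟩` the compatible approximator. If `ω*`
globally minimizes the mean-squared error `ε²(ω) = Σ ρ(s,a)(Q^ω(s,a) − Q(s,a))²`, then
`Σ ρ(s,a)(Q^{ω*}(s,a) − Q(s,a)) ψ(s,a) = 0`, and hence for any baseline `b : S × A → ℝ`,
`Σ ρ(s,a)(Q^{ω*}(s,a) − b(s,a)) ψ(s,a) = Σ ρ(s,a)(Q(s,a) − b(s,a)) ψ(s,a)`. -/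
theorem compatible_function_approximation_unbiased
    {S A : Type*} [Fintype S] [Fintype A] (d : ℕ)
    (ρ : S × A → ℝ) (hρ_pos : ∀ sa, 0 < ρ sa) (hρ_sum : ∑ sa : S × A, ρ sa = 1)
    (ψ : S × A → Fin d → ℝ)
    (Q : S × A → ℝ)
    (Qω : (Fin d → ℝ) → S × A → ℝ)
    (hQω : ∀ ω sa, Qω ω sa = ∑ i, ω i * ψ sa i)
    (ε2 : (Fin d → ℝ) → ℝ)
    (hε2 : ∀ ω, ε2 ω = ∑ sa : S × A, ρ sa * (Qω ω sa - Q sa) ^ 2)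
    (ωstar : Fin d → ℝ)
    (hmin : ∀ ω : Fin d → ℝ, ε2 ωstar ≤ ε2 ω) :
    (∑ sa : S × A, (ρ sa * (Qω ωstar sa - Q sa)) • ψ sa) = 0 ∧
    ∀ b : S × A → ℝ,
      (∑ sa : S × A, (ρ sa * (Qω ωstar sa - b sa)) • ψ sa) =
        ∑ sa : S × A, (ρ sa * (Q sa - b sa)) • ψ sa :=
  compatible_function_approximation_unbiased_general d ρ ψ Q Qω hQω ε2 hε2 ωstar hmin
end
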